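/- arXiv:1101.3287 — 3 statements merged into one kernel-verified Lean document; each statement's English description precedes it below -/
import Mathlib

section
/- For every real p > 0, the series Σ_{m=1}^∞ 2^{-1-m}·m!/p^{(m+1)} converges and its sum equals (d/dp) ln r(p) = (1/2)[ψ((p+1)/2) − ψ(p/2)] − 1/(2p). -/
/-!
By the Beta integral, `m! / p^{(m+1)} = ∫₀¹ t^(p-1) (1-t)^m dt`; summing the geometric series in
`(1-t)/2` under the integral turns the series into `∫₀¹ t^(p-1) (1/(1+t) - 1/2) dt = β(p) - 1/(2p)`,
where `β(p) = ∫₀¹ t^(p-1)/(1+t) dt = Σ_m (1/(p+2m) - 1/(p+2m+1))` (expand `1/(1+t)` in powers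
of `t`). In both expansions the terms are nonnegative, so summation and integration commute.

On the other side, Euler's limit `log Γ(x) = lim_n (x log n + log n! - Σ_{m ≤ n} log (x+m))`
exhibits `log Γ((q+1)/2) - log Γ(q/2)` as a limit of functions whose derivatives are the partial
sums of `β(q)`. These converge uniformly on `q ≥ p/2`, so the limit has derivative `β`, and
`log r(q) = log Γ((q+1)/2) - log Γ(q/2) - log (q/2) / 2` has derivative `β(p) - 1/(2p)` at `p`.
-/

noncomputable def r (p : ℝ) : ℝ :=
  Real.Gamma ((p + 1) / 2) / (Real.sqrt (p / 2) * Real.Gamma (p / 2))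

open Real Set Filter Topology MeasureTheory Finset
open scoped Nat

theorem hasSum_integral_of_nonneg {α ι : Type*} [MeasurableSpace α] [Countable ι] {μ : Measure α}
    {F : ι → α → ℝ} {f : α → ℝ} (hF_meas : ∀ i, AEStronglyMeasurable (F i) μ)
    (hF_nonneg : ∀ i, 0 ≤ᵐ[μ] F i) (hf : Integrable f μ)
    (h_lim : ∀ᵐ a ∂μ, HasSum (fun i => F i a) (f a)) :
    HasSum (fun i => ∫ a, F i a ∂μ) (∫ a, f a ∂μ) :=
  hasSum_integral_of_dominated_convergence F hF_meas
    (fun i => (hF_nonneg i).mono fun _ ha => (Real.norm_of_nonneg ha).le)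
    (h_lim.mono fun _ ha => ha.summable)
    (hf.congr (h_lim.mono fun _ ha => ha.tsum_eq.symm)) h_lim

theorem intervalIntegral.hasSum_integral_of_nonneg {a b : ℝ} (hab : a ≤ b) {F : ℕ → ℝ → ℝ}
    {f : ℝ → ℝ} (hF : ∀ n, IntervalIntegrable (F n) volume a b)
    (hf : IntervalIntegrable f volume a b) (hF_nonneg : ∀ n, ∀ t ∈ Ioo a b, 0 ≤ F n t)
    (h_lim : ∀ t ∈ Ioo a b, HasSum (fun n => F n t) (f t)) :
    HasSum (fun n => ∫ t in a..b, F n t) (∫ t in a..b, f t) := by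
  simp only [intervalIntegral.integral_of_le hab, integral_Ioc_eq_integral_Ioo]
  have hIoo {g : ℝ → ℝ} (hg : IntervalIntegrable g volume a b) : IntegrableOn g (Ioo a b) :=
    ((intervalIntegrable_iff_integrableOn_Ioc_of_le hab).1 hg).mono_set Ioo_subset_Ioc_self
  exact _root_.hasSum_integral_of_nonneg (fun n => (hIoo (hF n)).aestronglyMeasurable)
    (fun n => ae_restrict_of_forall_mem measurableSet_Ioo (hF_nonneg n)) (hIoo hf)
    (ae_restrict_of_forall_mem measurableSet_Ioo h_lim)

theorem integral_rpow_mul_one_sub_pow {q : ℝ} (hq : 0 < q) (m : ℕ) :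
    ∫ t in (0 : ℝ)..1, t ^ (q - 1) * (1 - t) ^ m = m ! / ∏ j ∈ range (m + 1), (q + j) := by
  have hbeta := Complex.betaIntegral_eval_nat_add_one_right (u := q) (by simpa using hq) m
  rw [Complex.betaIntegral, add_sub_cancel_right] at hbeta
  have hreal : ∫ t in (0 : ℝ)..1, (t : ℂ) ^ ((q : ℂ) - 1) * (1 - (t : ℂ)) ^ (m : ℂ)
      = ((∫ t in (0 : ℝ)..1, t ^ (q - 1) * (1 - t) ^ m : ℝ) : ℂ) := by
    rw [← intervalIntegral.integral_ofReal]
    refine intervalIntegral.integral_congr fun t ht => ?_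
    rw [Set.uIcc_of_le zero_le_one] at ht
    simp only [Complex.cpow_natCast, Complex.ofReal_mul, Complex.ofReal_pow, Complex.ofReal_sub,
      Complex.ofReal_one, Complex.ofReal_cpow ht.1, Complex.ofReal_sub, Complex.ofReal_one]
  rw [hreal] at hbeta
  exact_mod_cast hbeta

theorem integral_rpow_sub_one {q : ℝ} (hq : 0 < q) : ∫ t in (0 : ℝ)..1, t ^ (q - 1) = q⁻¹ := by
  simpa using integral_rpow_mul_one_sub_pow hq 0

theorem intervalIntegrable_rpow_sub_one_mul {q : ℝ} (hq : 0 < q) {g : ℝ → ℝ}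
    (hg : ContinuousOn g (Icc 0 1)) :
    IntervalIntegrable (fun t => t ^ (q - 1) * g t) volume 0 1 :=
  (intervalIntegral.intervalIntegrable_rpow' (by linarith)).mul_continuousOn
    (by rwa [Set.uIcc_of_le zero_le_one])

theorem intervalIntegrable_rpow_sub_one_div_one_add {q : ℝ} (hq : 0 < q) :
    IntervalIntegrable (fun t => t ^ (q - 1) / (1 + t)) volume 0 1 := by
  simpa only [div_eq_mul_inv] using intervalIntegrable_rpow_sub_one_mul hq
    (g := fun t => (1 + t)⁻¹)
    (ContinuousOn.inv₀ (by fun_prop) fun t ht => (by linarith [ht.1] : (0 : ℝ) < 1 + t).ne')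

theorem rpow_add_two_mul_nat {t : ℝ} (ht : 0 < t) (y : ℝ) (m : ℕ) :
    t ^ (y + 2 * m) = t ^ y * (t ^ 2) ^ m := by
  rw [rpow_add ht, ← pow_mul, ← rpow_natCast]
  push_cast
  ring_nf

theorem hasSum_inv_sub_inv_integral {x : ℝ} (hx : 0 < x) :
    HasSum (fun m : ℕ => (x + 2 * m)⁻¹ - (x + 2 * m + 1)⁻¹)
      (∫ t in (0 : ℝ)..1, t ^ (x - 1) / (1 + t)) := by
  have hpos (m : ℕ) : 0 < x + 2 * m := by positivity
  have hint {s : ℝ} (hs : 0 < s) : IntervalIntegrable (fun t : ℝ => t ^ (s - 1)) volume 0 1 :=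
    intervalIntegral.intervalIntegrable_rpow' (by linarith)
  have hterm (m : ℕ) (t : ℝ) (ht : t ∈ Ioo (0 : ℝ) 1) :
      t ^ (x + 2 * m - 1) - t ^ (x + 2 * m + 1 - 1) = t ^ (x - 1) * (1 - t) * (t ^ 2) ^ m := by
    rw [add_sub_cancel_right, add_sub_right_comm, rpow_add_two_mul_nat ht.1,
      rpow_add_two_mul_nat ht.1, rpow_sub_one ht.1.ne']
    have := ht.1.ne'
    field_simp
  have hsum := intervalIntegral.hasSum_integral_of_nonneg zero_le_one
    (F := fun m t => t ^ (x + 2 * m - 1) - t ^ (x + 2 * m + 1 - 1))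
    (fun m => (hint (hpos m)).sub (hint (by linarith [hpos m])))
    (intervalIntegrable_rpow_sub_one_div_one_add hx)
    (fun m t ht => by
      have h0 : 0 ≤ t ^ (x - 1) := rpow_nonneg ht.1.le _
      have h1 : 0 ≤ 1 - t := by linarith [ht.2]
      rw [hterm m t ht]
      positivity)
    (fun t ht => by
      have h2 : t ^ 2 < 1 := by nlinarith [ht.1, ht.2]
      have hgeo := (hasSum_geometric_of_lt_one (sq_nonneg t) h2).mul_left (t ^ (x - 1) * (1 - t))
      have : t ^ (x - 1) * (1 - t) * (1 - t ^ 2)⁻¹ = t ^ (x - 1) / (1 + t) := by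
        have h1 : 1 - t ^ 2 ≠ 0 := by linarith
        have h3 : 1 + t ≠ 0 := by linarith [ht.1]
        field_simp
        ring
      rw [← this]
      exact hgeo.congr_fun (hterm · t ht))
  convert hsum using 1
  funext m
  rw [intervalIntegral.integral_sub (hint (hpos m)) (hint (by linarith [hpos m])),
    integral_rpow_sub_one (hpos m), integral_rpow_sub_one (by linarith [hpos m])]

theorem hasSum_factorial_div_pochhammer_integral {p : ℝ} (hp : 0 < p) :
    HasSum (fun n : ℕ => 1 / 2 ^ (n + 2) * ((n + 1)! : ℝ) / ∏ j ∈ range (n + 2), (p + j))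
      ((∫ t in (0 : ℝ)..1, t ^ (p - 1) / (1 + t)) - (2 * p)⁻¹) := by
  have hpow : IntervalIntegrable (fun t : ℝ => t ^ (p - 1)) volume 0 1 :=
    intervalIntegral.intervalIntegrable_rpow' (by linarith)
  have hdiff := (intervalIntegrable_rpow_sub_one_div_one_add hp).sub (hpow.div_const 2)
  have hterm (n : ℕ) (t : ℝ) :
      1 / 2 ^ (n + 2) * (t ^ (p - 1) * (1 - t) ^ (n + 1))
        = t ^ (p - 1) * (1 - t) / 4 * ((1 - t) / 2) ^ n := by
    rw [div_pow, pow_succ, pow_add]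
    field_simp
    ring
  have hsum := intervalIntegral.hasSum_integral_of_nonneg zero_le_one
    (F := fun n t => 1 / 2 ^ (n + 2) * (t ^ (p - 1) * (1 - t) ^ (n + 1)))
    (f := fun t => t ^ (p - 1) / (1 + t) - t ^ (p - 1) / 2)
    (fun n => (intervalIntegrable_rpow_sub_one_mul hp (by fun_prop)).const_mul _) hdiff
    (fun n t ht => by
      have h0 : 0 ≤ t ^ (p - 1) := rpow_nonneg ht.1.le _
      have h1 : 0 ≤ 1 - t := by linarith [ht.2]
      positivity)
    (fun t ht => by
      have h0 : 0 ≤ (1 - t) / 2 := by linarith [ht.2]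
      have h1 : (1 - t) / 2 < 1 := by linarith [ht.1]
      have hgeo := (hasSum_geometric_of_lt_one h0 h1).mul_left (t ^ (p - 1) * (1 - t) / 4)
      have : t ^ (p - 1) * (1 - t) / 4 * (1 - (1 - t) / 2)⁻¹
          = t ^ (p - 1) / (1 + t) - t ^ (p - 1) / 2 := by
        have h3 : 1 + t ≠ 0 := by linarith [ht.1]
        rw [show 1 - (1 - t) / 2 = (1 + t) / 2 by ring]
        field_simp
        ring
      rw [← this]
      exact hgeo.congr_fun (hterm · t))
  convert hsum using 1
  · funext n
    rw [intervalIntegral.integral_const_mul, integral_rpow_mul_one_sub_pow hp, mul_div_assoc]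
  · rw [intervalIntegral.integral_sub (intervalIntegrable_rpow_sub_one_div_one_add hp)
      (hpow.div_const 2), intervalIntegral.integral_div, integral_rpow_sub_one hp]
    ring

/-- Nielsen's beta function `β(x) = Σ_k (-1)^k / (x + k) = (ψ((x+1)/2) - ψ(x/2)) / 2`,
with consecutive terms paired. -/
noncomputable def nielsenBeta (x : ℝ) : ℝ :=
  ∑' m : ℕ, ((x + 2 * m)⁻¹ - (x + 2 * m + 1)⁻¹)

theorem hasSum_nielsenBeta {x : ℝ} (hx : 0 < x) :
    HasSum (fun m : ℕ => (x + 2 * m)⁻¹ - (x + 2 * m + 1)⁻¹) (nielsenBeta x) :=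
  (hasSum_inv_sub_inv_integral hx).summable.hasSum

theorem nielsenBeta_eq_integral {x : ℝ} (hx : 0 < x) :
    nielsenBeta x = ∫ t in (0 : ℝ)..1, t ^ (x - 1) / (1 + t) :=
  (hasSum_inv_sub_inv_integral hx).tsum_eq

theorem inv_sub_inv_add_one_nonneg {b : ℝ} (hb : 0 < b) : 0 ≤ b⁻¹ - (b + 1)⁻¹ :=
  sub_nonneg.2 (inv_anti₀ hb (by linarith))

theorem inv_sub_inv_add_one_le {a b : ℝ} (ha : 0 < a) (hab : a ≤ b) :
    b⁻¹ - (b + 1)⁻¹ ≤ a⁻¹ - (a + 1)⁻¹ := by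
  have key {y : ℝ} (hy : 0 < y) : y⁻¹ - (y + 1)⁻¹ = (y * (y + 1))⁻¹ := by
    field_simp
    ring
  rw [key (ha.trans_le hab), key ha]
  exact inv_anti₀ (by positivity) (mul_le_mul hab (by linarith) (by linarith) (by linarith))

theorem tendstoUniformlyOn_nielsenBeta {c : ℝ} (hc : 0 < c) :
    TendstoUniformlyOn (fun n (x : ℝ) => ∑ m ∈ range n, ((x + 2 * m)⁻¹ - (x + 2 * m + 1)⁻¹))
      nielsenBeta atTop (Set.Ici c) :=
  tendstoUniformlyOn_tsum_nat (hasSum_nielsenBeta hc).summable fun m x hx => by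
    have hcm : 0 < c + 2 * m := by positivity
    have hle : c + 2 * m ≤ x + 2 * m := add_le_add_left hx _
    rw [Real.norm_of_nonneg (inv_sub_inv_add_one_nonneg (hcm.trans_le hle))]
    exact inv_sub_inv_add_one_le hcm hle

namespace Real.BohrMollerup

theorem hasDerivAt_logGammaSeq {x : ℝ} (hx : ∀ m : ℕ, x + m ≠ 0) (n : ℕ) :
    HasDerivAt (logGammaSeq · n) (log n - ∑ m ∈ range (n + 1), (x + m)⁻¹) x := by
  have := (((hasDerivAt_id x).mul_const (log n)).add_const (log n !)).fun_sub
    (HasDerivAt.fun_sum (u := range (n + 1)) fun (m : ℕ) _ =>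
      ((hasDerivAt_id x).add_const (m : ℝ)).log (hx m))
  simpa [logGammaSeq] using this

theorem hasDerivAt_logGammaSeq_half_sub {x : ℝ} (hx : 0 < x) (n : ℕ) :
    HasDerivAt (fun y => logGammaSeq ((y + 1) / 2) n - logGammaSeq (y / 2) n)
      (∑ m ∈ range (n + 1), ((x + 2 * m)⁻¹ - (x + 2 * m + 1)⁻¹)) x := by
  have h₁ := (hasDerivAt_logGammaSeq (x := (x + 1) / 2) (fun m => by positivity) n).comp x
    (((hasDerivAt_id x).add_const 1).div_const 2)
  have h₂ := (hasDerivAt_logGammaSeq (x := x / 2) (fun m => by positivity) n).comp x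
    ((hasDerivAt_id x).div_const 2)
  refine (h₁.fun_sub h₂).congr_deriv ?_
  have hterm (m : ℕ) : (x + 2 * m)⁻¹ - (x + 2 * m + 1)⁻¹
      = (x / 2 + m)⁻¹ * (1 / 2) - ((x + 1) / 2 + m)⁻¹ * (1 / 2) := by
    field_simp
    ring
  rw [Finset.sum_congr rfl fun m _ => hterm m, Finset.sum_sub_distrib, ← Finset.sum_mul,
    ← Finset.sum_mul]
  ring

end Real.BohrMollerup

open Real.BohrMollerup in
theorem hasDerivAt_log_Gamma_half_sub {x : ℝ} (hx : 0 < x) :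
    HasDerivAt (fun y => log (Gamma ((y + 1) / 2)) - log (Gamma (y / 2))) (nielsenBeta x) x := by
  have hshift := (tendstoUniformlyOn_nielsenBeta (half_pos hx)).mono (Ioi_subset_Ici_self)
  have hpos {y : ℝ} (hy : y ∈ Ioi (x / 2)) : 0 < y := (half_pos hx).trans hy
  exact hasDerivAt_of_tendstoUniformlyOn isOpen_Ioi
    (fun u hu => (tendsto_add_atTop_nat 1).eventually (hshift u hu))
    (Eventually.of_forall fun n y hy => hasDerivAt_logGammaSeq_half_sub (hpos hy) n)
    (fun y hy => (tendsto_log_gamma (by linarith [hpos hy])).sub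
      (tendsto_log_gamma (half_pos (hpos hy))))
    (half_lt_self hx)

theorem log_r {q : ℝ} (hq : 0 < q) :
    log (r q) = log (Gamma ((q + 1) / 2)) - log (Gamma (q / 2)) - log (q / 2) / 2 := by
  have hq₂ : 0 < q / 2 := half_pos hq
  rw [r, log_div (Gamma_pos_of_pos (by positivity)).ne' (by positivity),
    log_mul (sqrt_pos.2 hq₂).ne' (Gamma_pos_of_pos hq₂).ne', log_sqrt hq₂.le]
  ring

theorem hasDerivAt_log_r {p : ℝ} (hp : 0 < p) :
    HasDerivAt (fun q => log (r q)) (nielsenBeta p - (2 * p)⁻¹) p := by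
  have h := (hasDerivAt_log_Gamma_half_sub hp).sub
    ((((hasDerivAt_id p).div_const 2).log (half_pos hp).ne').div_const 2)
  refine (h.congr_of_eventuallyEq ?_).congr_deriv ?_
  · filter_upwards [Ioi_mem_nhds hp] with q hq using log_r hq
  · simp only [id]
    field_simp

theorem hasSum_ell_series (p : ℝ) (hp : 0 < p) :
    HasSum
      (fun n : ℕ => (1 / 2 ^ (n + 2)) * ((n + 1).factorial : ℝ) /
        ∏ j ∈ Finset.range (n + 2), (p + j))
      (deriv (fun q => Real.log (r q)) p) := by
  rw [(hasDerivAt_log_r hp).deriv, nielsenBeta_eq_integral hp]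
  exact hasSum_factorial_div_pochhammer_integral hp
end

section
/- For all real x > -1/2, ψ(x+1) − ψ(x+1/2) = 1/p + 2·Σ_{m=1}^∞ 2^{-1-m}·m!/p^{(m+1)} where p = 2x+1. -/
noncomputable def psi (x : ℝ) : ℝ := deriv Real.Gamma x / Real.Gamma x

/-!
Put `p = 2x + 1` and `f(p) = ψ((p + 1)/2) - ψ(p/2)`. The recurrence `ψ(y + 1) = ψ(y) + 1/y`
gives `f(p) + f(p + 1) = 2/p`, and `f ≥ 0` because `ψ` is increasing (`log Γ` is convex). The
right-hand side is `S(p) = ∑_{m ≥ 0} a_m(p)` with `a_m(p) = m! / (2^m p^{(m+1)})`, and the terms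
satisfy `a_m(p + 1) = a_m(p) - 2 a_{m+1}(p)`, which telescopes to `S(p) + S(p + 1) = 2/p`, with
`S ≥ 0`. Two nonnegative solutions of this equation lie in `[0, 2/p]` and their difference `h`
satisfies `h(p + 1) = -h(p)`, so `|h(p)| = |h(p + n)| ≤ 2/(p + n) → 0`.
-/

open Real Filter Topology Finset Set

lemma psi_add_one {y : ℝ} (hy : ∀ m : ℕ, y ≠ -m) : psi (y + 1) = psi y + 1 / y := by
  have hy0 : y ≠ 0 := by simpa using hy 0
  have hshift : Gamma ∘ (· + 1) =ᶠ[𝓝 y] fun t => t * Gamma t := by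
    filter_upwards [eventually_ne_nhds hy0] with t ht using Gamma_add_one ht
  have hGamma_y1 : DifferentiableAt ℝ Gamma (y + 1) := differentiableAt_Gamma fun m h =>
    hy (m + 1) (by push_cast; linarith)
  calc psi (y + 1) = logDeriv (Gamma ∘ (· + 1)) y := by
        rw [logDeriv_comp (g := (· + 1)) hGamma_y1 (by fun_prop), deriv_add_const, deriv_id'',
          mul_one]; rfl
    _ = logDeriv (fun t => t * Gamma t) y := (logDeriv_congr_nhds hshift).eq_of_nhds
    _ = logDeriv id y + logDeriv Gamma y :=
        logDeriv_mul (f := id) y hy0 (Gamma_ne_zero hy) differentiableAt_id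
          (differentiableAt_Gamma hy)
    _ = psi y + 1 / y := by rw [logDeriv_id, add_comm]; rfl

lemma ne_neg_natCast_of_pos {y : ℝ} (hy : 0 < y) (m : ℕ) : y ≠ -m := by
  have : (0 : ℝ) ≤ m := m.cast_nonneg
  linarith

lemma psi_monotoneOn : MonotoneOn psi (Ioi 0) := by
  have hdiff (y : ℝ) (hy : y ∈ Ioi (0 : ℝ)) : DifferentiableAt ℝ Gamma y :=
    differentiableAt_Gamma (ne_neg_natCast_of_pos hy)
  have heq : EqOn (deriv (log ∘ Gamma)) psi (Ioi 0) := fun y hy => by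
    rw [Function.comp_def, deriv.log (hdiff y hy) (Gamma_pos_of_pos hy).ne']; rfl
  exact (convexOn_log_Gamma.monotoneOn_deriv fun y hy =>
    ((hdiff y hy).log (Gamma_pos_of_pos hy).ne')).congr heq

lemma eq_zero_of_neg_shift_of_abs_le_div {h : ℝ → ℝ} {C p : ℝ}
    (hshift : ∀ q > 0, h (q + 1) = -h q) (hbound : ∀ q > 0, |h q| ≤ C / q) (hp : 0 < p) :
    h p = 0 := by
  have hconst (n : ℕ) : |h (p + n)| = |h p| := by
    induction n with
    | zero => simp
    | succ n ih => rw [Nat.cast_succ, ← add_assoc, hshift _ (by positivity), abs_neg, ih]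
  have hlim : Tendsto (fun n : ℕ => C / (p + n)) atTop (𝓝 0) :=
    tendsto_const_nhds.div_atTop (tendsto_atTop_add_const_left _ _ tendsto_natCast_atTop_atTop)
  have : |h p| ≤ 0 := ge_of_tendsto' hlim fun n => hconst n ▸ hbound _ (by positivity)
  exact abs_nonpos_iff.mp this

lemma le_div_of_add_shift_eq {f : ℝ → ℝ} {c p : ℝ} (hf : ∀ q > 0, 0 ≤ f q)
    (hrec : ∀ q > 0, f q + f (q + 1) = c / q) (hp : 0 < p) : f p ≤ c / p := by
  linarith [hrec p hp, hf (p + 1) (by linarith)]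

lemma eqOn_of_add_shift_eq {f g : ℝ → ℝ} {c : ℝ}
    (hf : ∀ q > 0, 0 ≤ f q) (hg : ∀ q > 0, 0 ≤ g q)
    (hfrec : ∀ q > 0, f q + f (q + 1) = c / q) (hgrec : ∀ q > 0, g q + g (q + 1) = c / q) :
    EqOn f g (Ioi 0) := fun p hp => sub_eq_zero.mp <|
  eq_zero_of_neg_shift_of_abs_le_div (h := f - g) (C := c)
    (fun q hq => by simp only [Pi.sub_apply]; linarith [hfrec q hq, hgrec q hq])
    (fun q hq => abs_sub_le_iff.mpr ⟨by linarith [hg q hq, le_div_of_add_shift_eq hf hfrec hq],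
      by linarith [hf q hq, le_div_of_add_shift_eq hg hgrec hq]⟩) hp

noncomputable def digammaHalfTerm (p : ℝ) (m : ℕ) : ℝ :=
  m.factorial / (2 ^ m * ∏ j ∈ range (m + 1), (p + j))

noncomputable def digammaHalfSeries (p : ℝ) : ℝ := ∑' m, digammaHalfTerm p m

lemma digammaHalfTerm_nonneg {p : ℝ} (hp : 0 ≤ p) (m : ℕ) : 0 ≤ digammaHalfTerm p m := by
  unfold digammaHalfTerm
  have : 0 ≤ ∏ j ∈ range (m + 1), (p + j) := prod_nonneg fun j _ => by positivity
  positivity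

lemma digammaHalfTerm_add_one {p : ℝ} (hp : 0 < p) (m : ℕ) :
    digammaHalfTerm (p + 1) m = digammaHalfTerm p m - 2 * digammaHalfTerm p (m + 1) := by
  have hrel : (∏ j ∈ range (m + 1), (p + 1 + j)) * p =
      (∏ j ∈ range (m + 1), (p + j)) * (p + (m + 1)) := by
    have hfirst := prod_range_succ' (fun j : ℕ => p + j) (m + 1)
    simp only [Nat.cast_add, Nat.cast_one, Nat.cast_zero, add_zero, ← add_assoc,
      add_right_comm p _ (1 : ℝ)] at hfirst
    rw [← hfirst, prod_range_succ, Nat.cast_succ]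
  unfold digammaHalfTerm
  rw [Nat.factorial_succ, prod_range_succ (fun j : ℕ => p + j) (m + 1)]
  set A := ∏ j ∈ range (m + 1), (p + j)
  set B := ∏ j ∈ range (m + 1), (p + 1 + j)
  have hA : 0 < A := prod_pos fun j _ => by positivity
  have hB : 0 < B := prod_pos fun j _ => by positivity
  push_cast
  field_simp
  linear_combination -(2 ^ (m + 1) : ℝ) * hrel

lemma digammaHalfTerm_zero (p : ℝ) : digammaHalfTerm p 0 = 1 / p := by
  simp [digammaHalfTerm]

lemma digammaHalfTerm_add_shift {p : ℝ} (hp : 0 < p) (m : ℕ) :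
    digammaHalfTerm p m + digammaHalfTerm (p + 1) m =
      2 * (digammaHalfTerm p m - digammaHalfTerm p (m + 1)) := by
  rw [digammaHalfTerm_add_one hp]; ring

lemma summable_digammaHalfTerm {p : ℝ} (hp : 0 < p) : Summable (digammaHalfTerm p) := by
  refine summable_of_sum_range_le (c := 2 / p) (digammaHalfTerm_nonneg hp.le) fun N => ?_
  have htelescope : ∑ m ∈ range N, (digammaHalfTerm p m + digammaHalfTerm (p + 1) m) =
      2 / p - 2 * digammaHalfTerm p N := by
    rw [sum_congr rfl fun m _ => digammaHalfTerm_add_shift hp m, ← mul_sum, sum_range_sub',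
      digammaHalfTerm_zero]
    ring
  have hshift : 0 ≤ ∑ m ∈ range N, digammaHalfTerm (p + 1) m :=
    sum_nonneg fun m _ => digammaHalfTerm_nonneg (by positivity) m
  rw [sum_add_distrib] at htelescope
  linarith [digammaHalfTerm_nonneg hp.le N]

lemma digammaHalfSeries_nonneg {p : ℝ} (hp : 0 ≤ p) : 0 ≤ digammaHalfSeries p :=
  tsum_nonneg (digammaHalfTerm_nonneg hp)

lemma digammaHalfSeries_add_shift {p : ℝ} (hp : 0 < p) :
    digammaHalfSeries p + digammaHalfSeries (p + 1) = 2 / p := by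
  have hs := summable_digammaHalfTerm hp
  have hsucc : Summable fun m => digammaHalfTerm p (m + 1) := (summable_nat_add_iff 1).mpr hs
  rw [digammaHalfSeries, digammaHalfSeries,
    ← hs.tsum_add (summable_digammaHalfTerm (by positivity)),
    tsum_congr (digammaHalfTerm_add_shift hp), tsum_mul_left, hs.tsum_sub hsucc,
    hs.tsum_eq_zero_add, digammaHalfTerm_zero]
  ring

lemma digammaHalfSeries_eq {p : ℝ} (hp : 0 < p) :
    digammaHalfSeries p = 1 / p + 2 * ∑' n : ℕ, (1 / 2 ^ (n + 2)) * ((n + 1).factorial : ℝ) /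
      ∏ j ∈ range (n + 2), (p + j) := by
  rw [digammaHalfSeries, (summable_digammaHalfTerm hp).tsum_eq_zero_add, digammaHalfTerm_zero,
    ← tsum_mul_left]
  congr 1
  refine tsum_congr fun n => ?_
  rw [digammaHalfTerm]
  field_simp
  ring

lemma psi_half_sub_add_shift {p : ℝ} (hp : 0 < p) :
    (psi ((p + 1) / 2) - psi (p / 2)) + (psi ((p + 1 + 1) / 2) - psi ((p + 1) / 2)) = 2 / p := by
  rw [show (p + 1 + 1) / 2 = p / 2 + 1 by ring,
    psi_add_one (ne_neg_natCast_of_pos (half_pos hp))]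
  field_simp
  ring

lemma psi_half_sub_nonneg {p : ℝ} (hp : 0 < p) : 0 ≤ psi ((p + 1) / 2) - psi (p / 2) :=
  sub_nonneg.mpr <| psi_monotoneOn (half_pos hp) (show 0 < (p + 1) / 2 by positivity) (by linarith)

theorem digamma_diff_eq_series (x : ℝ) (hx : x > -1/2) :
    psi (x + 1) - psi (x + 1/2) =
      1 / (2 * x + 1) +
        2 * ∑' n : ℕ, (1 / 2 ^ (n + 2)) * ((n + 1).factorial : ℝ) /
          ∏ j ∈ Finset.range (n + 2), (2 * x + 1 + j) := by
  have hp : 0 < 2 * x + 1 := by linarith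
  calc psi (x + 1) - psi (x + 1/2) = psi ((2 * x + 1 + 1) / 2) - psi ((2 * x + 1) / 2) := by
        ring_nf
    _ = digammaHalfSeries (2 * x + 1) :=
        eqOn_of_add_shift_eq (fun _ => psi_half_sub_nonneg)
          (fun _ hq => digammaHalfSeries_nonneg hq.le) (fun _ => psi_half_sub_add_shift)
          (fun _ => digammaHalfSeries_add_shift) hp
    _ = _ := digammaHalfSeries_eq hp
end

section
/- For all real p > 0, r(p) < U_2(p) := ((1+2a)/(1+a)^4)^{1/8} where a = 1/p, i.e., r(p)^8 < p^3(p+2)/(p+1)^4. -/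
/-!
From `Γ(x + 1) = x Γ(x)` one gets `p (p + 2) r(p + 2)² = (p + 1)² r(p)²`. Hence the ratio
`q(p) = r(p)⁸ (p + 1)⁴ / (p³ (p + 2))` satisfies `q(p) / q(p + 2) = p (p+2)⁶ (p+4) / ((p+1)⁴ (p+3)⁴)`,
which is `< 1`: with `u = (p + 2)²` the difference of numerator and denominator is
`6u² - 4u + 1 > 0`. Log-convexity of `Γ` gives `r ≤ 1`, so `q(p) ≤ (1 + 1/p)³ → 1`.
Therefore `q(p) < q(p + 2) ≤ q(p + 4) ≤ ⋯ ≤ 1`.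
-/

open Real Filter Topology

theorem Gamma_add_half_le_sqrt_mul_Gamma {x : ℝ} (hx : 0 < x) :
    Gamma (x + 1 / 2) ≤ √x * Gamma x := by
  have hΓ := Gamma_pos_of_pos hx
  calc Gamma (x + 1 / 2) = Gamma (1 / 2 * x + 1 / 2 * (x + 1)) := by ring_nf
    _ ≤ Gamma x ^ (1 / 2 : ℝ) * Gamma (x + 1) ^ (1 / 2 : ℝ) :=
      Gamma_mul_add_mul_le_rpow_Gamma_mul_rpow_Gamma hx (by linarith) (by norm_num)
        (by norm_num) (by norm_num)
    _ = √(Gamma x) * √(x * Gamma x) := by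
      rw [Gamma_add_one hx.ne', ← sqrt_eq_rpow, ← sqrt_eq_rpow]
    _ = √x * Gamma x := by
      rw [sqrt_mul hx.le, mul_left_comm, mul_self_sqrt hΓ.le]

theorem r_pos {p : ℝ} (hp : 0 < p) : 0 < r p := by
  have := Gamma_pos_of_pos (by linarith : 0 < (p + 1) / 2)
  have := Gamma_pos_of_pos (by linarith : 0 < p / 2)
  unfold r
  positivity

theorem r_le_one {p : ℝ} (hp : 0 < p) : r p ≤ 1 := by
  have hx : 0 < p / 2 := by positivity
  have := Gamma_pos_of_pos hx
  rw [r, div_le_one (by positivity), show (p + 1) / 2 = p / 2 + 1 / 2 by ring]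
  exact Gamma_add_half_le_sqrt_mul_Gamma hx

theorem r_add_two_sq_mul {p : ℝ} (hp : 0 < p) :
    r (p + 2) ^ 2 * (p * (p + 2)) = (p + 1) ^ 2 * r p ^ 2 := by
  have hx : 0 < p / 2 := by positivity
  have := Gamma_pos_of_pos hx
  have := Gamma_pos_of_pos (by linarith : 0 < (p + 1) / 2)
  have hnum : Gamma ((p + 2 + 1) / 2) = (p + 1) / 2 * Gamma ((p + 1) / 2) := by
    rw [show (p + 2 + 1) / 2 = (p + 1) / 2 + 1 by ring, Gamma_add_one (by positivity)]
  have hden : Gamma ((p + 2) / 2) = p / 2 * Gamma (p / 2) := by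
    rw [show (p + 2) / 2 = p / 2 + 1 by ring, Gamma_add_one hx.ne']
  simp only [r, hnum, hden, div_pow, mul_pow, sq_sqrt hx.le,
    sq_sqrt (by positivity : (0 : ℝ) ≤ (p + 2) / 2)]
  field_simp

theorem mul_pow_six_mul_lt (p : ℝ) :
    p * (p + 2) ^ 6 * (p + 4) < (p + 1) ^ 4 * (p + 3) ^ 4 := by
  have key : (p + 1) ^ 4 * (p + 3) ^ 4 - p * (p + 2) ^ 6 * (p + 4)
      = 6 * ((p + 2) ^ 2 - 1 / 3) ^ 2 + 1 / 3 := by ring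
  linarith [sq_nonneg ((p + 2) ^ 2 - 1 / 3)]

noncomputable def ratioToBound (p : ℝ) : ℝ :=
  r p ^ 8 * (p + 1) ^ 4 / (p ^ 3 * (p + 2))

theorem ratioToBound_lt_add_two {p : ℝ} (hp : 0 < p) :
    ratioToBound p < ratioToBound (p + 2) := by
  have hr := r_pos (by linarith : 0 < p + 2)
  have hratio : ratioToBound p = r (p + 2) ^ 8 * (p * (p + 2) ^ 3) / (p + 1) ^ 4 := by
    rw [ratioToBound, div_eq_div_iff (by positivity) (by positivity)]
    have h4 := congrArg (· ^ 4) (r_add_two_sq_mul hp)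
    linear_combination -h4
  rw [hratio, ratioToBound, div_lt_div_iff₀ (by positivity) (by positivity)]
  calc r (p + 2) ^ 8 * (p * (p + 2) ^ 3) * ((p + 2) ^ 3 * (p + 2 + 2))
      = r (p + 2) ^ 8 * (p * (p + 2) ^ 6 * (p + 4)) := by ring
    _ < r (p + 2) ^ 8 * ((p + 1) ^ 4 * (p + 3) ^ 4) :=
      mul_lt_mul_of_pos_left (mul_pow_six_mul_lt p) (pow_pos hr 8)
    _ = r (p + 2) ^ 8 * (p + 2 + 1) ^ 4 * (p + 1) ^ 4 := by ring

theorem ratioToBound_le {p : ℝ} (hp : 0 < p) : ratioToBound p ≤ (1 + 1 / p) ^ 3 := by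
  have hr := r_pos hp
  calc ratioToBound p ≤ (p + 1) ^ 4 / (p ^ 3 * (p + 2)) := by
        rw [ratioToBound]
        gcongr
        exact mul_le_of_le_one_left (by positivity) (pow_le_one₀ hr.le (r_le_one hp))
    _ ≤ (1 + 1 / p) ^ 3 := by
        rw [div_le_iff₀ (by positivity)]
        field_simp
        nlinarith [pow_pos (by linarith : 0 < p + 1) 3]

theorem ratioToBound_lt_one {p : ℝ} (hp : 0 < p) : ratioToBound p < 1 := by
  have hmono : Monotone fun n : ℕ => ratioToBound (p + 2 + 2 * n) := by
    refine monotone_nat_of_le_succ fun n => ?_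
    have h := ratioToBound_lt_add_two (by positivity : 0 < p + 2 + 2 * n)
    push_cast
    convert h.le using 2
    ring
  have hbound : ∀ n : ℕ, ratioToBound (p + 2 + 2 * n) ≤ (1 + 1 / (p + 2 + 2 * n)) ^ 3 :=
    fun n => ratioToBound_le (by positivity)
  have hlim : Tendsto (fun n : ℕ => (1 + 1 / (p + 2 + 2 * n)) ^ 3) atTop (𝓝 1) := by
    have hden : Tendsto (fun n : ℕ => p + 2 + 2 * (n : ℝ)) atTop atTop :=
      tendsto_atTop_add_const_left _ _
        (tendsto_natCast_atTop_atTop.const_mul_atTop two_pos)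
    have h0 : Tendsto (fun n : ℕ => 1 / (p + 2 + 2 * (n : ℝ))) atTop (𝓝 0) :=
      tendsto_const_nhds.div_atTop hden
    simpa using (h0.const_add 1).pow 3
  calc ratioToBound p < ratioToBound (p + 2) := ratioToBound_lt_add_two hp
    _ ≤ 1 := le_of_tendsto_of_tendsto' tendsto_const_nhds hlim fun n => by
        simpa using (hmono (Nat.zero_le n)).trans (hbound n)

theorem r_lt_U2 (p : ℝ) (hp : 0 < p) :
    r p < ((1 + 2 * (1 / p)) / (1 + 1 / p) ^ 4) ^ ((1 : ℝ) / 8) ∧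
    r p ^ 8 < p ^ 3 * (p + 2) / (p + 1) ^ 4 := by
  have h8 : r p ^ 8 < p ^ 3 * (p + 2) / (p + 1) ^ 4 := by
    have h := ratioToBound_lt_one hp
    rw [ratioToBound, div_lt_one (by positivity)] at h
    rwa [lt_div_iff₀ (by positivity)]
  have hU : (1 + 2 * (1 / p)) / (1 + 1 / p) ^ 4 = p ^ 3 * (p + 2) / (p + 1) ^ 4 := by
    field_simp
  refine ⟨?_, h8⟩
  rw [hU, one_div, lt_rpow_inv_iff_of_pos (r_pos hp).le (by positivity) (by norm_num)]
  exact_mod_cast h8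
end
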